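/- arXiv:2108.12649 — 3 statements merged into one kernel-verified Lean document; each statement's English description precedes it below -/
import Mathlib

section
/- Let a ∈ ℝ, v > 0 and h₁, h₂ > 0 with max(h₁,h₂)·|a| ≤ v, and define q⁻ = a⁻/h₁ + (v − (h₁a⁻ + h₂a⁺))/(h₁(h₁+h₂)), q⁺ = a⁺/h₂ + (v − (h₁a⁻ + h₂a⁺))/(h₂(h₁+h₂)), and q⁰ = −q⁻ − q⁺, where a⁺ = max(a,0) and a⁻ = max(−a,0). Then q⁻ ≥ 0, q⁺ ≥ 0, q⁰ ≤ 0, and q⁻ + q⁰ + q⁺ = 0; i.e. the generator-matrix row (q_{i,i−1}, q_{i,i}, q_{i,i+1}) = (q⁻, q⁰, q⁺) of the CTMC approximation satisfies the q-property. -/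
/-- For `a : ℝ`, `v > 0`, `h₁, h₂ > 0` with `max h₁ h₂ * |a| ≤ v`, the
generator-row entries `q⁻ = a⁻/h₁ + (v - (h₁a⁻ + h₂a⁺))/(h₁(h₁+h₂))`,
`q⁺ = a⁺/h₂ + (v - (h₁a⁻ + h₂a⁺))/(h₂(h₁+h₂))`, `q⁰ = -q⁻ - q⁺` satisfy the q-property:
`q⁻ ≥ 0`, `q⁺ ≥ 0`, `q⁰ ≤ 0`, and `q⁻ + q⁰ + q⁺ = 0`.  Here `a⁺ = max a 0`, `a⁻ = max (-a) 0`. -/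
theorem ctmc_generator_row_q_property (a v h₁ h₂ : ℝ) (hv : 0 < v) (hh₁ : 0 < h₁)
    (hh₂ : 0 < h₂) (hbound : max h₁ h₂ * |a| ≤ v)
    (qminus qplus qzero : ℝ)
    (hqminus : qminus =
      max (-a) 0 / h₁ + (v - (h₁ * max (-a) 0 + h₂ * max a 0)) / (h₁ * (h₁ + h₂)))
    (hqplus : qplus =
      max a 0 / h₂ + (v - (h₁ * max (-a) 0 + h₂ * max a 0)) / (h₂ * (h₁ + h₂)))
    (hqzero : qzero = -qminus - qplus) :
    0 ≤ qminus ∧ 0 ≤ qplus ∧ qzero ≤ 0 ∧ qminus + qzero + qplus = 0 := by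
  have hkey : h₁ * max (-a) 0 + h₂ * max a 0 ≤ max h₁ h₂ * |a| := by
    rcases le_or_gt 0 a with h | h
    · rw [max_eq_right (by linarith), max_eq_left h, abs_of_nonneg h]
      have : h₂ * a ≤ max h₁ h₂ * a :=
        mul_le_mul_of_nonneg_right (le_max_right _ _) h
      linarith
    · rw [max_eq_left (by linarith), max_eq_right (by linarith), abs_of_neg h]
      have : h₁ * (-a) ≤ max h₁ h₂ * (-a) :=
        mul_le_mul_of_nonneg_right (le_max_left _ _) (by linarith)
      linarith
  have hnum : 0 ≤ v - (h₁ * max (-a) 0 + h₂ * max a 0) := by linarith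
  have h12 : 0 < h₁ + h₂ := by linarith
  have hm : 0 ≤ qminus := by
    rw [hqminus]
    have := div_nonneg (le_max_right (-a) 0) hh₁.le
    have := div_nonneg hnum (mul_pos hh₁ h12).le
    linarith
  have hp : 0 ≤ qplus := by
    rw [hqplus]
    have := div_nonneg (le_max_right a 0) hh₂.le
    have := div_nonneg hnum (mul_pos hh₂ h12).le
    linarith
  exact ⟨hm, hp, by rw [hqzero]; linarith, by rw [hqzero]; ring⟩
end

section
/- Let Λ = diag(λ₁, …, λ_m) be a diagonal m×m matrix with pairwise distinct entries, let B be any m×m matrix, and let Δ be real. Then Σ_{n=1}^∞ (Δⁿ/n!) Σ_{j=0}^{n−1} Λ^j B Λ^{n−1−j} = B ∘ X(Λ,Δ), where ∘ denotes the Hadamard (entrywise) product and X(Λ,Δ) is the m×m matrix with X_{ii} = Δ·e^{Δλ_i} and X_{ij} = (e^{Δλ_i} − e^{Δλ_j})/(λ_i − λ_j) for i ≠ j. -/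
/-!
Since `Λ` is diagonal, the `(i, k)` entry of `Λ ^ j * B * Λ ^ (n - 1 - j)` is
`λᵢ ^ j * B i k * λₖ ^ (n - 1 - j)`, so the series splits entrywise into `B i k` times the scalar
series `∑ Δⁿ / n! * ∑ⱼ λᵢ ^ j * λₖ ^ (n - 1 - j)`. For `λᵢ ≠ λₖ` the inner sum is
`(λᵢⁿ - λₖⁿ) / (λᵢ - λₖ)`, and the series is the difference quotient of two exponential series;
for `λᵢ = λₖ` it is `n * λᵢ ^ (n - 1)`, and the series is the termwise derivative of `e^{Δ t}`.
-/

open Finset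

namespace Matrix

variable {n α : Type*} [Fintype n] [DecidableEq n] [CommSemiring α]

theorem diagonal_pow_mul_mul_diagonal_pow_apply (d : n → α) (B : Matrix n n α) (p q : ℕ)
    (i k : n) : (diagonal d ^ p * B * diagonal d ^ q) i k = d i ^ p * B i k * d k ^ q := by
  simp [diagonal_pow, diagonal_mul, mul_diagonal]

end Matrix

/-- The entries of the paper's `X(Λ, Δ)`: the divided difference of `t ↦ e^{Δ t}` at `a` and `b`. -/
noncomputable def expDivDiff (Δ a b : ℝ) : ℝ :=
  if a = b then Δ * Real.exp (Δ * a) else (Real.exp (Δ * a) - Real.exp (Δ * b)) / (a - b)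

theorem Real.hasSum_pow_div_factorial (x : ℝ) :
    HasSum (fun n : ℕ => x ^ n / n.factorial) (Real.exp x) :=
  Real.exp_eq_exp_ℝ ▸ NormedSpace.expSeries_div_hasSum_exp x

theorem hasSum_pow_div_factorial_mul_geom_sum₂_of_ne (Δ : ℝ) {a b : ℝ} (h : a ≠ b) :
    HasSum (fun n : ℕ => Δ ^ n / n.factorial * ∑ j ∈ range n, a ^ j * b ^ (n - 1 - j))
      ((Real.exp (Δ * a) - Real.exp (Δ * b)) / (a - b)) := by
  refine (((Real.hasSum_pow_div_factorial (Δ * a)).sub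
    (Real.hasSum_pow_div_factorial (Δ * b))).div_const (a - b)).congr_fun fun n => ?_
  rw [geom₂_sum h, mul_pow, mul_pow]
  ring

theorem hasSum_pow_div_factorial_mul_geom_sum₂_self (Δ a : ℝ) :
    HasSum (fun n : ℕ => Δ ^ n / n.factorial * ∑ j ∈ range n, a ^ j * a ^ (n - 1 - j))
      (Δ * Real.exp (Δ * a)) := by
  refine (hasSum_nat_add_iff' 1).1 ?_
  rw [sum_range_one, range_zero, sum_empty, mul_zero, sub_zero]
  refine ((Real.hasSum_pow_div_factorial (Δ * a)).mul_left Δ).congr_fun fun n => ?_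
  rw [geom_sum₂_self, Nat.add_sub_cancel, Nat.factorial_succ, mul_pow]
  push_cast
  field_simp
  ring

theorem hasSum_expDivDiff (Δ a b : ℝ) :
    HasSum (fun n : ℕ => Δ ^ n / n.factorial * ∑ j ∈ range n, a ^ j * b ^ (n - 1 - j))
      (expDivDiff Δ a b) := by
  unfold expDivDiff
  split_ifs with h
  · exact h ▸ hasSum_pow_div_factorial_mul_geom_sum₂_self Δ a
  · exact hasSum_pow_div_factorial_mul_geom_sum₂_of_ne Δ h

/-- For `Λ = diagonal lam` with pairwise distinct entries, any `m × m` real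
matrix `B`, and real `Δ`, the series `∑_{n ≥ 1} (Δⁿ/n!) ∑_{j=0}^{n-1} Λʲ B Λ^{n-1-j}`
converges to the Hadamard product `B ⊙ X(Λ,Δ)`, where `X i i = Δ e^{Δ lam i}` and
`X i j = (e^{Δ lam i} - e^{Δ lam j})/(lam i - lam j)` for `i ≠ j`. -/
theorem diagonal_directional_derivative_hadamard (m : ℕ) (lam : Fin m → ℝ)
    (hdist : Function.Injective lam) (B : Matrix (Fin m) (Fin m) ℝ) (Δ : ℝ) :
    HasSum (fun n : ℕ => if n = 0 then (0 : Matrix (Fin m) (Fin m) ℝ) else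
        (Δ ^ n / (n.factorial : ℝ)) • ∑ j ∈ Finset.range n,
          (Matrix.diagonal lam) ^ j * B * (Matrix.diagonal lam) ^ (n - 1 - j))
      (Matrix.hadamard B (Matrix.of fun i j =>
        if i = j then Δ * Real.exp (Δ * lam i)
        else (Real.exp (Δ * lam i) - Real.exp (Δ * lam j)) / (lam i - lam j))) := by
  refine Pi.hasSum.2 fun i => Pi.hasSum.2 fun k => ?_
  -- turning `i = k` into `lam i = lam k` makes the entry of `X` unfold to `expDivDiff`
  simp only [Matrix.hadamard_apply, Matrix.of_apply, ← hdist.eq_iff]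
  refine ((hasSum_expDivDiff Δ (lam i) (lam k)).mul_left (B i k)).congr_fun fun n => ?_
  split_ifs with hn
  · simp [hn]
  · simp only [Matrix.smul_apply, Matrix.sum_apply, smul_eq_mul,
      Matrix.diagonal_pow_mul_mul_diagonal_pow_apply, mul_sum]
    exact sum_congr rfl fun j _ => by ring
end

section
/- Let D, M, V, U, X be arbitrary m×m real matrices. Then Σ_{1 ≤ i,j ≤ m} ( D ∘ V((Uᵀ M V) ∘ X)Uᵀ )_{ij} = Σ_{1 ≤ i,j ≤ m} ( M ∘ U((Vᵀ D U) ∘ X)Vᵀ )_{ij}, where ∘ denotes the Hadamard (entrywise) product. -/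
open Matrix

lemma key (m : ℕ) (A P H Q : Matrix (Fin m) (Fin m) ℝ) :
    trace (A * (P * H * Q.transpose).transpose)
      = ∑ i, ∑ j, Matrix.hadamard (P.transpose * A * Q) H i j := by
  rw [Matrix.sum_hadamard_eq, transpose_mul, transpose_mul, transpose_transpose,
      ← Matrix.mul_assoc, ← Matrix.mul_assoc, Matrix.trace_mul_comm,
      ← Matrix.mul_assoc, ← Matrix.mul_assoc]

/-- For arbitrary `m × m` real matrices `D, M, V, U, X`,
`∑ᵢⱼ (D ⊙ V((Uᵀ M V) ⊙ X)Uᵀ)ᵢⱼ = ∑ᵢⱼ (M ⊙ U((Vᵀ D U) ⊙ X)Vᵀ)ᵢⱼ`. -/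
theorem gradient_rewriting_identity (m : ℕ) (D M V U X : Matrix (Fin m) (Fin m) ℝ) :
    ∑ i, ∑ j,
        Matrix.hadamard D
          (V * Matrix.hadamard (U.transpose * M * V) X * U.transpose) i j =
      ∑ i, ∑ j,
        Matrix.hadamard M
          (U * Matrix.hadamard (V.transpose * D * U) X * V.transpose) i j := by
  rw [Matrix.sum_hadamard_eq, Matrix.sum_hadamard_eq, key, key]
  refine Finset.sum_congr rfl fun i _ => Finset.sum_congr rfl fun j _ => ?_
  simp only [Matrix.hadamard_apply]
  ring
end
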